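/- arXiv:2212.02540 — 5 statements merged into one kernel-verified Lean document; each statement's English description precedes it below -/
import Mathlib

section
/- Let ρ₁, ρ₂, ρ₃, ρ̃₁, ρ̃₂, ρ̃₃ ∈ ℂ² be spinors of three null momenta satisfying momentum conservation Matrix.vecMulVec ρ₁ ρ̃₁ + Matrix.vecMulVec ρ₂ ρ̃₂ + Matrix.vecMulVec ρ₃ ρ̃₃ = 0, and suppose ⟨ρ₁ ρ₂⟩ ≠ 0. Then all square brackets vanish: [ρ̃₁ ρ̃₂] = 0, [ρ̃₂ ρ̃₃] = 0, and [ρ̃₃ ρ̃₁] = 0. (Three-point chirality dichotomy of complex kinematics: if one angle bracket is nonzero, all dotted spinors are proportional, which underlies the distinction between MHV₃ and anti-MHV₃ amplitudes.) -/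
/-- Angle bracket of two spinors: ⟨a b⟩ = a 0 * b 1 − a 1 * b 0. -/
def angleBracket (a b : Fin 2 → ℂ) : ℂ := a 0 * b 1 - a 1 * b 0

/-- Square bracket of two dotted spinors (same formula). -/
def squareBracket (a b : Fin 2 → ℂ) : ℂ := a 0 * b 1 - a 1 * b 0

/-- Three-point chirality dichotomy: if one angle bracket is nonzero, all
square brackets vanish. -/
theorem threePoint_chirality_dichotomy
    (ρ₁ ρ₂ ρ₃ ρ₁' ρ₂' ρ₃' : Fin 2 → ℂ)
    (hcons : Matrix.vecMulVec ρ₁ ρ₁' + Matrix.vecMulVec ρ₂ ρ₂' +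
      Matrix.vecMulVec ρ₃ ρ₃' = 0)
    (h12 : angleBracket ρ₁ ρ₂ ≠ 0) :
    squareBracket ρ₁' ρ₂' = 0 ∧ squareBracket ρ₂' ρ₃' = 0 ∧
      squareBracket ρ₃' ρ₁' = 0 := by
  have e : ∀ i j, ρ₁ i * ρ₁' j + ρ₂ i * ρ₂' j + ρ₃ i * ρ₃' j = 0 := by
    intro i j
    have := congrFun (congrFun hcons i) j
    simpa [Matrix.vecMulVec, Matrix.add_apply] using this
  set A := angleBracket ρ₁ ρ₂ with hA
  have h1 : ∀ j, A * ρ₁' j = (ρ₂ 0 * ρ₃ 1 - ρ₂ 1 * ρ₃ 0) * ρ₃' j := by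
    intro j
    rw [hA]; unfold angleBracket
    linear_combination ρ₂ 1 * e 0 j - ρ₂ 0 * e 1 j
  have h2 : ∀ j, A * ρ₂' j = -(ρ₁ 0 * ρ₃ 1 - ρ₁ 1 * ρ₃ 0) * ρ₃' j := by
    intro j
    rw [hA]; unfold angleBracket
    linear_combination ρ₁ 0 * e 1 j - ρ₁ 1 * e 0 j
  refine ⟨?_, ?_, ?_⟩
  · have : A * (A * squareBracket ρ₁' ρ₂') = 0 := by
      unfold squareBracket
      linear_combination (A * ρ₂' 1) * h1 0 - (A * ρ₂' 0) * h1 1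
        + ((ρ₂ 0 * ρ₃ 1 - ρ₂ 1 * ρ₃ 0) * ρ₃' 0) * h2 1
        - ((ρ₂ 0 * ρ₃ 1 - ρ₂ 1 * ρ₃ 0) * ρ₃' 1) * h2 0
    exact (mul_eq_zero.1 ((mul_eq_zero.1 this).resolve_left h12)).resolve_left h12
  · have : A * squareBracket ρ₂' ρ₃' = 0 := by
      unfold squareBracket
      linear_combination ρ₃' 1 * h2 0 - ρ₃' 0 * h2 1
    exact (mul_eq_zero.1 this).resolve_left h12
  · have : A * squareBracket ρ₃' ρ₁' = 0 := by
      unfold squareBracket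
      linear_combination ρ₃' 0 * h1 1 - ρ₃' 1 * h1 0
    exact (mul_eq_zero.1 this).resolve_left h12
end

section
/- Let ρ₁, ρ₂, ρ₃, ρ̃₁, ρ̃₂, ρ̃₃ ∈ ℂ² be spinors of three null momenta satisfying momentum conservation Matrix.vecMulVec ρ₁ ρ̃₁ + Matrix.vecMulVec ρ₂ ρ̃₂ + Matrix.vecMulVec ρ₃ ρ̃₃ = 0, and suppose [ρ̃₁ ρ̃₃] ≠ 0. Then for all reference spinors ζ, ζ' ∈ ℂ² one has ⟨ζ ρ₁⟩ · ⟨ζ' ρ₂⟩ = ⟨ζ' ρ₁⟩ · ⟨ζ ρ₂⟩. (Reference-spinor independence: the ratio ⟨ζ ρ₁⟩/⟨ζ ρ₂⟩ appearing in the polarization-stripped 3-point amplitude does not depend on the choice of reference spinor ζ.) -/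
/-- Reference-spinor independence: the ratio ⟨ζ ρ₁⟩/⟨ζ ρ₂⟩ does not depend on
the reference spinor ζ, given 3-point momentum conservation and [ρ̃₁ ρ̃₃] ≠ 0. -/
theorem referenceSpinor_independence
    (ρ₁ ρ₂ ρ₃ ρ₁' ρ₂' ρ₃' : Fin 2 → ℂ)
    (hcons : Matrix.vecMulVec ρ₁ ρ₁' + Matrix.vecMulVec ρ₂ ρ₂' +
      Matrix.vecMulVec ρ₃ ρ₃' = 0)
    (h13 : squareBracket ρ₁' ρ₃' ≠ 0) :
    ∀ ζ ζ' : Fin 2 → ℂ,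
      angleBracket ζ ρ₁ * angleBracket ζ' ρ₂ =
        angleBracket ζ' ρ₁ * angleBracket ζ ρ₂ := by
  have key : ∀ i, ρ₁ i * squareBracket ρ₁' ρ₃' + ρ₂ i * squareBracket ρ₂' ρ₃' = 0 := by
    intro i
    have h0 := congrFun (congrFun hcons i) 0
    have h1 := congrFun (congrFun hcons i) 1
    simp only [Matrix.add_apply, Matrix.vecMulVec_apply, Matrix.zero_apply] at h0 h1
    simp only [squareBracket]
    linear_combination ρ₃' 1 * h0 - ρ₃' 0 * h1
  have hS : ∀ ζ : Fin 2 → ℂ, angleBracket ζ ρ₁ * squareBracket ρ₁' ρ₃' =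
      -(angleBracket ζ ρ₂ * squareBracket ρ₂' ρ₃') := by
    intro ζ
    simp only [angleBracket]
    linear_combination ζ 0 * key 1 - ζ 1 * key 0
  intro ζ ζ'
  apply mul_right_cancel₀ (mul_ne_zero h13 h13)
  linear_combination angleBracket ζ' ρ₂ * squareBracket ρ₁' ρ₃' * hS ζ -
    angleBracket ζ ρ₂ * squareBracket ρ₁' ρ₃' * hS ζ'
end

section
/- Let ρ₁, ρ₂, ρ₃, ρ₄, ρ̃₁, ρ̃₂, ρ̃₃, ρ̃₄ ∈ ℂ² be spinors of four null momenta satisfying momentum conservation ∑ᵢ₌₁⁴ Matrix.vecMulVec ρᵢ ρ̃ᵢ = 0, and suppose ⟨ρ₂ ρ₄⟩ ≠ 0. Then ⟨ρ₂ ρ₄⟩ · [ρ̃₃ ρ̃₄] = ⟨ρ₁ ρ₂⟩ · [ρ̃₃ ρ̃₁]; equivalently [ρ̃₃ ρ̃₄] − (⟨ρ₁ ρ₂⟩/⟨ρ₂ ρ₄⟩) · [ρ̃₃ ρ̃₁] = 0. (This is the vanishing of the shifted bracket [3 4̂] under the BCFW [−,+⟩-shift with z = ⟨1 2⟩/⟨2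 4⟩, which forces the number of extra derivatives m to be zero in the 4-point MHV amplitude of the quasi-chiral theory.) -/
/-- Vanishing of the shifted bracket [3 4̂] under the BCFW [−,+⟩-shift with
z = ⟨1 2⟩/⟨2 4⟩, for 4-point momentum-conserving null kinematics. -/
theorem shifted_bracket_vanishes
    (ρ₁ ρ₂ ρ₃ ρ₄ ρ₁' ρ₂' ρ₃' ρ₄' : Fin 2 → ℂ)
    (hcons : Matrix.vecMulVec ρ₁ ρ₁' + Matrix.vecMulVec ρ₂ ρ₂' +
      Matrix.vecMulVec ρ₃ ρ₃' + Matrix.vecMulVec ρ₄ ρ₄' = 0)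
    (h24 : angleBracket ρ₂ ρ₄ ≠ 0) :
    angleBracket ρ₂ ρ₄ * squareBracket ρ₃' ρ₄' =
      angleBracket ρ₁ ρ₂ * squareBracket ρ₃' ρ₁' := by
  have E : ∀ a b : Fin 2, ρ₁ a * ρ₁' b + ρ₂ a * ρ₂' b + ρ₃ a * ρ₃' b + ρ₄ a * ρ₄' b = 0 := by
    intro a b
    have := congrFun (congrFun hcons a) b
    simpa [Matrix.vecMulVec] using this
  simp only [angleBracket, squareBracket]
  linear_combination ρ₂ 0 * ρ₃' 0 * E 1 1 - ρ₂ 0 * ρ₃' 1 * E 1 0 -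
    ρ₂ 1 * ρ₃' 0 * E 0 1 + ρ₂ 1 * ρ₃' 1 * E 0 0
end

section
/- Let n ≥ 2 be a natural number and g : Fin n → ℂ. Then the following are equivalent: (i) for every choice of spinors ρ, ρ̃ : Fin n → ℂ² satisfying momentum conservation ∑ᵢ Matrix.vecMulVec (ρ i) (ρ̃ i) = 0 and for all reference spinors a, b ∈ ℂ², one has ∑ᵢ g i · ⟨a (ρ i)⟩ · [(ρ̃ i) b] = 0; (ii) g is a constant function. (This is the equivalence principle in spinor variables: the one-derivative (m = 1, spin-2) gauge-invariance constraint ∑ᵢ gᵢ pᵢ^{αα̇} κ̃_{α̇} = 0 on all momentum-conserving configurations forces the soft graviton to couple with the same strength gᵢ = const to every external leg, and conversely any constant coupling satisfies the constraint by momentum conservation.) -/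
/-- The equivalence principle in spinor variables: the m = 1 (spin-2)
gauge-invariance constraint ∑ᵢ gᵢ ⟨a i⟩[i b] = 0 holds on all
momentum-conserving configurations iff the couplings gᵢ are constant. -/
theorem equivalence_principle (n : ℕ) (hn : 2 ≤ n) (g : Fin n → ℂ) :
    (∀ ρ ρ' : Fin n → Fin 2 → ℂ,
        (∑ i, Matrix.vecMulVec (ρ i) (ρ' i)) = 0 →
        ∀ a b : Fin 2 → ℂ,
          ∑ i, g i * angleBracket a (ρ i) * squareBracket (ρ' i) b = 0) ↔
      (∃ c : ℂ, ∀ i, g i = c) := by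
  constructor
  · intro h
    -- show any two distinct legs have equal coupling
    have key : ∀ i j : Fin n, i ≠ j → g i = g j := by
      intro i j hij
      set e : Fin 2 → ℂ := ![0, 1]
      set f : Fin 2 → ℂ := ![1, 0]
      set ρ : Fin n → Fin 2 → ℂ := fun k => if k = i then e else if k = j then e else 0
      set ρ' : Fin n → Fin 2 → ℂ := fun k => if k = i then f else if k = j then -f else 0
      have hcons : (∑ k, Matrix.vecMulVec (ρ k) (ρ' k)) = 0 := by
        have hsum : (∑ k, Matrix.vecMulVec (ρ k) (ρ' k))
            = Matrix.vecMulVec (ρ i) (ρ' i) + Matrix.vecMulVec (ρ j) (ρ' j) :=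
          Finset.sum_eq_add_of_mem i j (Finset.mem_univ i) (Finset.mem_univ j) hij
            (by
              rintro k - ⟨hki, hkj⟩
              ext x y
              simp [ρ, ρ', hki, hkj, Matrix.vecMulVec_apply])
        rw [hsum]
        simp only [ρ, ρ', if_pos rfl, if_neg hij, if_neg (Ne.symm hij), if_pos rfl]
        ext x y
        simp [Matrix.vecMulVec_apply]
      have hc := h ρ ρ' hcons ![1, 0] ![0, 1]
      have hsum2 : (∑ k, g k * angleBracket ![1,0] (ρ k) * squareBracket (ρ' k) ![0,1])
          = g i * angleBracket ![1,0] (ρ i) * squareBracket (ρ' i) ![0,1]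
            + g j * angleBracket ![1,0] (ρ j) * squareBracket (ρ' j) ![0,1] :=
        Finset.sum_eq_add_of_mem i j (Finset.mem_univ i) (Finset.mem_univ j) hij
          (by
            rintro k - ⟨hki, hkj⟩
            simp [ρ, ρ', hki, hkj, angleBracket, squareBracket])
      rw [hsum2] at hc
      simp only [ρ, ρ', if_pos rfl, if_neg hij, if_neg (Ne.symm hij)] at hc
      simp [angleBracket, squareBracket, e, f] at hc
      linear_combination hc
    refine ⟨g ⟨0, by omega⟩, fun i => ?_⟩
    by_cases hi : i = ⟨0, by omega⟩
    · rw [hi]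
    · exact key i ⟨0, by omega⟩ hi
  · rintro ⟨c, hc⟩ ρ ρ' hcons a b
    have h10 := congrFun (congrFun hcons 1) 0
    have h11 := congrFun (congrFun hcons 1) 1
    have h00 := congrFun (congrFun hcons 0) 0
    have h01 := congrFun (congrFun hcons 0) 1
    simp only [Matrix.sum_apply, Matrix.vecMulVec_apply, Matrix.zero_apply] at h10 h11 h00 h01
    have expand : ∀ i, g i * angleBracket a (ρ i) * squareBracket (ρ' i) b
        = (a 0 * b 1 * c) * (ρ i 1 * ρ' i 0) - (a 0 * b 0 * c) * (ρ i 1 * ρ' i 1)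
          - (a 1 * b 1 * c) * (ρ i 0 * ρ' i 0) + (a 1 * b 0 * c) * (ρ i 0 * ρ' i 1) := by
      intro i
      rw [hc i]
      simp [angleBracket, squareBracket]
      ring
    rw [Finset.sum_congr rfl (fun i _ => expand i)]
    simp only [Finset.sum_add_distrib, Finset.sum_sub_distrib, ← Finset.mul_sum,
      h10, h11, h00, h01]
    ring
end

section
/- Let n ≥ 3 and k ≥ 2 be natural numbers and g : Fin n → ℂ. Suppose that for every choice of spinors ρ, ρ̃ : Fin n → ℂ² satisfying momentum conservation ∑ᵢ Matrix.vecMulVec (ρ i) (ρ̃ i) = 0 and for all reference spinors a, b ∈ ℂ², one has ∑ᵢ g i · (⟨a (ρ i)⟩)^k · ([(ρ̃ i) b])^k = 0. Then g = 0. (This is Weinberg's higher-spin triviality: the gauge-invariance constraint ∑ᵢ gᵢ pᵢ^{μ₁}…pᵢ^{μ_k} = 0, imposed on all momentum-conserving null configurations for a soft particle of spin k + 1 ≥ 3, admits only the trivial solution in which all coupling constants vanish.) -/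
/-- Weinberg's higher-spin triviality: for k ≥ 2 (soft spin k + 1 ≥ 3), the
constraint ∑ᵢ gᵢ ⟨a i⟩^k [i b]^k = 0 on all momentum-conserving null
configurations forces all couplings to vanish. -/
theorem weinberg_higher_spin_triviality (n k : ℕ) (hn : 3 ≤ n) (hk : 2 ≤ k)
    (g : Fin n → ℂ)
    (h : ∀ ρ ρ' : Fin n → Fin 2 → ℂ,
        (∑ i, Matrix.vecMulVec (ρ i) (ρ' i)) = 0 →
        ∀ a b : Fin 2 → ℂ,
          ∑ i, g i * angleBracket a (ρ i) ^ k * squareBracket (ρ' i) b ^ k = 0) :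
    g = 0 := by
  have hk0 : k ≠ 0 := by omega
  funext i
  -- pick two other distinct indices j, l
  have hcard : 1 < ({i}ᶜ : Finset (Fin n)).card := by
    rw [Finset.card_compl]
    simp
    omega
  obtain ⟨j, hj, l, hl, hjl⟩ := Finset.one_lt_card.mp hcard
  have hji : j ≠ i := by simpa using hj
  have hli : l ≠ i := by simpa using hl
  -- key polynomial identity
  have key : ∀ s t : ℂ,
      g i * (-1 : ℂ) ^ k * (-(s + t)) ^ k + (g j * (-1 : ℂ) ^ k * s ^ k
        + g l * (-1 : ℂ) ^ k * t ^ k) = 0 := by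
    intro s t
    set ρ : Fin n → Fin 2 → ℂ :=
      fun m => if m = i ∨ m = j ∨ m = l then ![1, 0] else 0 with hρ
    set ρ' : Fin n → Fin 2 → ℂ :=
      fun m => if m = i then ![-(s + t), 0] else if m = j then ![s, 0]
        else if m = l then ![t, 0] else 0 with hρ'
    have hS : (i : Fin n) ∉ ({j, l} : Finset (Fin n)) := by
      simp [Ne.symm hji, Ne.symm hli]
    have hmom : (∑ m, Matrix.vecMulVec (ρ m) (ρ' m)) = 0 := by
      rw [← Finset.sum_subset (Finset.subset_univ ({i, j, l} : Finset (Fin n)))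
        (by
          intro x _ hx
          simp only [Finset.mem_insert, Finset.mem_singleton, not_or] at hx
          obtain ⟨h1, h2, h3⟩ := hx
          have : ρ x = 0 := by simp [hρ, h1, h2, h3]
          rw [this]
          ext a b
          simp [Matrix.vecMulVec_apply])]
      rw [Finset.sum_insert hS, Finset.sum_pair hjl]
      simp only [hρ, hρ', if_pos rfl, if_pos (Or.inl rfl),
        if_pos (Or.inr (Or.inl rfl)), if_pos (Or.inr (Or.inr rfl)),
        if_neg hji, if_neg hli, if_neg hjl.symm]
      ext a b
      fin_cases a <;> fin_cases b <;>
        simp [Matrix.vecMulVec_apply] <;> ring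
    have heq := h ρ ρ' hmom ![0, 1] ![0, 1]
    rw [← Finset.sum_subset (Finset.subset_univ ({i, j, l} : Finset (Fin n)))
      (by
        intro x _ hx
        simp only [Finset.mem_insert, Finset.mem_singleton, not_or] at hx
        obtain ⟨h1, h2, h3⟩ := hx
        have : ρ x = 0 := by simp [hρ, h1, h2, h3]
        rw [this]
        simp [angleBracket, zero_pow hk0])] at heq
    rw [Finset.sum_insert hS, Finset.sum_pair hjl] at heq
    simp only [hρ, hρ', if_pos rfl, if_pos (Or.inl rfl),
      if_pos (Or.inr (Or.inl rfl)), if_pos (Or.inr (Or.inr rfl)),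
      if_neg hji, if_neg hli, if_neg hjl.symm] at heq
    simp only [angleBracket, squareBracket] at heq
    norm_num at heq ⊢
    convert heq using 2 <;> ring
  have E1 := key 1 0
  have E2 := key 0 1
  have E3 := key 1 1
  simp only [zero_pow hk0, one_pow, add_zero, zero_add, mul_zero, mul_one] at E1 E2 E3
  have hc : ((-1 : ℂ) ^ k) ^ 2 = 1 := by
    rw [← pow_mul, mul_comm, pow_mul]
    norm_num
  have hneg2 : ((-2 : ℂ)) ^ k = (-1 : ℂ) ^ k * 2 ^ k := by
    rw [show (-2 : ℂ) = -1 * 2 by ring, mul_pow]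
  have hgi : g i * ((2 : ℂ) ^ k - 2) = 0 := by
    have hneg1 : (-(1 + 1) : ℂ) ^ k = (-1 : ℂ) ^ k * 2 ^ k := by
      rw [show (-(1+1) : ℂ) = -2 by ring, hneg2]
    rw [hneg1] at E3
    linear_combination E3 - E1 - E2 - (2 ^ k - 2) * g i * hc
  have h2k : (2 : ℂ) ^ k - 2 ≠ 0 := by
    intro hh
    have : (2 : ℂ) ^ k = 2 := by linear_combination hh
    have hcast : ((2 ^ k : ℕ) : ℂ) = ((2 : ℕ) : ℂ) := by push_cast; rw [this]
    have := Nat.cast_injective hcast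
    have h4 : 2 ^ 2 ≤ 2 ^ k := Nat.pow_le_pow_right (by norm_num) hk
    omega
  have := mul_eq_zero.mp hgi
  simp [h2k] at this
  simpa using this
end
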